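/- co-1ReachU is not contained in 1N; that is, there exists a family of promise problems L such that co-L ∈ 1ReachU but L ∉ 1N. -/

import Mathlib

/-! ## One-way nondeterministic finite automata -/

structure OneNFA (α : Type) : Type 1 where
  Q : Type
  [finQ : Fintype Q]
  start : Q
  next : Q → α → Set Q
  next_nonempty : ∀ q a, (next q a).Nonempty
  acc : Set Q

attribute [instance] OneNFA.finQ

namespace OneNFA

variable {α : Type}

/-- The state complexity (number of inner states). -/
def sc (M : OneNFA α) : ℕ := Fintype.card M.Q

/-- `p` is a computation path of `M` on input `x`. -/
def IsPath (M : OneNFA α) (x : List α) (p : Fin (x.length + 1) → M.Q) : Prop :=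
  p 0 = M.start ∧ ∀ i : Fin x.length, p i.succ ∈ M.next (p i.castSucc) (x.get i)

/-- `p` is an accepting computation path of `M` on input `x`. -/
def IsAccPath (M : OneNFA α) (x : List α) (p : Fin (x.length + 1) → M.Q) : Prop :=
  M.IsPath x p ∧ p (Fin.last x.length) ∈ M.acc

def Accepts (M : OneNFA α) (x : List α) : Prop := ∃ p, M.IsAccPath x p

/-- `M` is a 1dfa: every transition set is a singleton. -/
def Deterministic (M : OneNFA α) : Prop := ∀ q a, ∃ q', M.next q a = {q'}

end OneNFA

/-! ## Families of promise problems -/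

structure PromiseFamily (α : Type) where
  pos : ℕ → Set (List α)
  neg : ℕ → Set (List α)
  disj : ∀ n, Disjoint (pos n) (neg n)

namespace PromiseFamily

def valid {α : Type} (L : PromiseFamily α) (n : ℕ) : Set (List α) := L.pos n ∪ L.neg n

def co {α : Type} (L : PromiseFamily α) : PromiseFamily α :=
  ⟨L.neg, L.pos, fun n => (L.disj n).symm⟩

end PromiseFamily

/-- A family of promise problems over some finite alphabet. -/
structure Family : Type 1 where
  alph : Type
  [finA : Fintype alph]
  prob : PromiseFamily alph

attribute [instance] Family.finA

def Family.co (F : Family) : Family := { alph := F.alph, prob := F.prob.co }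

/-! ## One-way machine families -/

def Solves1 {α : Type} (M : ℕ → OneNFA α) (L : PromiseFamily α) : Prop :=
  ∀ n, (∀ x ∈ L.pos n, (M n).Accepts x) ∧ (∀ x ∈ L.neg n, ¬ (M n).Accepts x)

def PolySize1 {α : Type} (M : ℕ → OneNFA α) : Prop :=
  ∃ p : Polynomial ℕ, ∀ n, (M n).sc ≤ p.eval n

def Unambiguous1 {α : Type} (M : ℕ → OneNFA α) (L : PromiseFamily α) : Prop :=
  ∀ n, ∀ x ∈ L.valid n, {p | (M n).IsAccPath x p}.Subsingleton

def AcceptFew1 {α : Type} (M : ℕ → OneNFA α) (L : PromiseFamily α) : Prop :=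
  ∃ P : MvPolynomial (Fin 2) ℕ, ∀ n, ∀ x ∈ L.valid n,
    {p | (M n).IsAccPath x p}.ncard ≤ MvPolynomial.eval ![n, x.length] P

def WeaklyUnambiguous1 {α : Type} (M : ℕ → OneNFA α) (L : PromiseFamily α) : Prop :=
  ∀ n, ∀ x ∈ L.valid n, ∀ q : (M n).Q,
    {p | (M n).IsAccPath x p ∧ p (Fin.last x.length) = q}.Subsingleton

def ReachUnambiguous1 {α : Type} (M : ℕ → OneNFA α) (L : PromiseFamily α) : Prop :=
  ∀ n, ∀ x ∈ L.valid n, ∀ i ≤ x.length, ∀ q : (M n).Q,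
    {p : Fin ((x.take i).length + 1) → (M n).Q |
      (M n).IsPath (x.take i) p ∧ p (Fin.last (x.take i).length) = q}.Subsingleton

def ReachFew1 {α : Type} (M : ℕ → OneNFA α) (L : PromiseFamily α) : Prop :=
  ∃ P : MvPolynomial (Fin 2) ℕ, ∀ n, ∀ x ∈ L.valid n, ∀ i ≤ x.length, ∀ q : (M n).Q,
    {p : Fin ((x.take i).length + 1) → (M n).Q |
      (M n).IsPath (x.take i) p ∧ p (Fin.last (x.take i).length) = q}.ncard ≤
      MvPolynomial.eval ![n, x.length] P

/-! ## One-way nonuniform state complexity classes -/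

def oneN : Set Family :=
  {F | ∃ M : ℕ → OneNFA F.alph, PolySize1 M ∧ Solves1 M F.prob}

def oneD : Set Family :=
  {F | ∃ M : ℕ → OneNFA F.alph, PolySize1 M ∧ (∀ n, (M n).Deterministic) ∧ Solves1 M F.prob}

def oneU : Set Family :=
  {F | ∃ M : ℕ → OneNFA F.alph, PolySize1 M ∧ Unambiguous1 M F.prob ∧ Solves1 M F.prob}

def oneFew : Set Family :=
  {F | ∃ M : ℕ → OneNFA F.alph, PolySize1 M ∧ AcceptFew1 M F.prob ∧ Solves1 M F.prob}

def oneFewU : Set Family :=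
  {F | ∃ M : ℕ → OneNFA F.alph, PolySize1 M ∧ AcceptFew1 M F.prob ∧
        WeaklyUnambiguous1 M F.prob ∧ Solves1 M F.prob}

def oneReachU : Set Family :=
  {F | ∃ M : ℕ → OneNFA F.alph, PolySize1 M ∧ AcceptFew1 M F.prob ∧
        ReachUnambiguous1 M F.prob ∧ Solves1 M F.prob}

def oneReachFew : Set Family :=
  {F | ∃ M : ℕ → OneNFA F.alph, PolySize1 M ∧ AcceptFew1 M F.prob ∧
        ReachFew1 M F.prob ∧ Solves1 M F.prob}

def oneReachFewU : Set Family :=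
  {F | ∃ M : ℕ → OneNFA F.alph, PolySize1 M ∧ AcceptFew1 M F.prob ∧
        ReachFew1 M F.prob ∧ WeaklyUnambiguous1 M F.prob ∧ Solves1 M F.prob}

/-- The complement class `co-C`. -/
def coC (C : Set Family) : Set Family := {F | F.co ∈ C}
/-! ## Two-way nondeterministic finite automata -/

/-- A tape symbol: either an input symbol, the left endmarker `Sum.inr false`,
or the right endmarker `Sum.inr true`. -/
def TapeSym (α : Type) : Type := α ⊕ Bool

/-- The symbol held in cell `i` of the tape containing `▷x◁`. -/
def tapeAt {α : Type} (x : List α) (i : ℕ) : TapeSym α :=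
  if h0 : i = 0 then Sum.inr false
  else if h : i ≤ x.length then Sum.inl (x.get ⟨i - 1, by omega⟩)
  else Sum.inr true

structure TwoNFA (α : Type) : Type 1 where
  Q : Type
  [finQ : Fintype Q]
  start : Q
  acc : Set Q
  rej : Set Q
  acc_rej_disj : Disjoint acc rej
  next : Q → TapeSym α → Set (Q × ℤ)
  next_dir : ∀ q a t, t ∈ next q a → t.2 = -1 ∨ t.2 = 0 ∨ t.2 = 1

attribute [instance] TwoNFA.finQ

namespace TwoNFA

variable {α : Type}

def sc (M : TwoNFA α) : ℕ := Fintype.card M.Q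

def Halting (M : TwoNFA α) (q : M.Q) : Prop := q ∈ M.acc ∨ q ∈ M.rej

/-- Configuration `c` yields configuration `c'` in one step on input `x`. -/
def Yields (M : TwoNFA α) (x : List α) (c c' : M.Q × ℕ) : Prop :=
  ¬ M.Halting c.1 ∧ c.2 ≤ x.length + 1 ∧ c'.2 ≤ x.length + 1 ∧
    ∃ d : ℤ, (c'.1, d) ∈ M.next c.1 (tapeAt x c.2) ∧ (c'.2 : ℤ) = (c.2 : ℤ) + d

/-- A partial computation path of length `k` of `M` on `x`. -/
def IsPartialPath (M : TwoNFA α) (x : List α) (k : ℕ) (p : Fin (k + 1) → M.Q × ℕ) : Prop :=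
  p 0 = (M.start, 0) ∧ ∀ i : Fin k, M.Yields x (p i.castSucc) (p i.succ)

/-- A (full) computation path: the final configuration is the only halting one. -/
def IsCompPath (M : TwoNFA α) (x : List α) (k : ℕ) (p : Fin (k + 1) → M.Q × ℕ) : Prop :=
  M.IsPartialPath x k p ∧ ∀ i : Fin (k + 1), (M.Halting (p i).1 ↔ i = Fin.last k)

def IsAccPath (M : TwoNFA α) (x : List α) (k : ℕ) (p : Fin (k + 1) → M.Q × ℕ) : Prop :=
  M.IsCompPath x k p ∧ (p (Fin.last k)).1 ∈ M.acc

def Accepts (M : TwoNFA α) (x : List α) : Prop := ∃ k p, M.IsAccPath x k p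

def Deterministic (M : TwoNFA α) : Prop := ∀ q a, ∃ t, M.next q a = {t}

/-- The set of accepting computation paths of `M` on `x`. -/
def accPaths (M : TwoNFA α) (x : List α) : Set ((k : ℕ) × (Fin (k + 1) → M.Q × ℕ)) :=
  {kp | M.IsAccPath x kp.1 kp.2}

/-- The set of computation paths of `M` on `x` ending at configuration `conf`. -/
def compPathsTo (M : TwoNFA α) (x : List α) (conf : M.Q × ℕ) :
    Set ((k : ℕ) × (Fin (k + 1) → M.Q × ℕ)) :=
  {kp | M.IsCompPath x kp.1 kp.2 ∧ kp.2 (Fin.last kp.1) = conf}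

/-- The set of partial computation paths of `M` on `x` ending at configuration `conf`. -/
def partialPathsTo (M : TwoNFA α) (x : List α) (conf : M.Q × ℕ) :
    Set ((k : ℕ) × (Fin (k + 1) → M.Q × ℕ)) :=
  {kp | M.IsPartialPath x kp.1 kp.2 ∧ kp.2 (Fin.last kp.1) = conf}

end TwoNFA

/-! ## Two-way machine families -/

def Solves2 {α : Type} (M : ℕ → TwoNFA α) (L : PromiseFamily α) : Prop :=
  ∀ n, (∀ x ∈ L.pos n, (M n).Accepts x) ∧ (∀ x ∈ L.neg n, ¬ (M n).Accepts x)

def PolySize2 {α : Type} (M : ℕ → TwoNFA α) : Prop :=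
  ∃ p : Polynomial ℕ, ∀ n, (M n).sc ≤ p.eval n

def Unambiguous2 {α : Type} (M : ℕ → TwoNFA α) (L : PromiseFamily α) : Prop :=
  ∀ n, ∀ x ∈ L.valid n, ((M n).accPaths x).Subsingleton

def AcceptFew2 {α : Type} (M : ℕ → TwoNFA α) (L : PromiseFamily α) : Prop :=
  ∃ P : MvPolynomial (Fin 2) ℕ, ∀ n, ∀ x ∈ L.valid n,
    ((M n).accPaths x).encard ≤ (MvPolynomial.eval ![n, x.length] P : ℕ∞)

def WeaklyUnambiguous2 {α : Type} (M : ℕ → TwoNFA α) (L : PromiseFamily α) : Prop :=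
  ∀ n, ∀ x ∈ L.valid n, ∀ conf : (M n).Q × ℕ, conf.1 ∈ (M n).acc →
    ((M n).compPathsTo x conf).Subsingleton

def ReachUnambiguous2 {α : Type} (M : ℕ → TwoNFA α) (L : PromiseFamily α) : Prop :=
  ∀ n, ∀ x ∈ L.valid n, ∀ conf : (M n).Q × ℕ,
    ((M n).partialPathsTo x conf).Subsingleton

def ReachFew2 {α : Type} (M : ℕ → TwoNFA α) (L : PromiseFamily α) : Prop :=
  ∃ P : MvPolynomial (Fin 2) ℕ, ∀ n, ∀ x ∈ L.valid n, ∀ conf : (M n).Q × ℕ,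
    ((M n).partialPathsTo x conf).encard ≤ (MvPolynomial.eval ![n, x.length] P : ℕ∞)

/-! ## Two-way nonuniform state complexity classes -/

def twoN : Set Family :=
  {F | ∃ M : ℕ → TwoNFA F.alph, PolySize2 M ∧ Solves2 M F.prob}

def twoD : Set Family :=
  {F | ∃ M : ℕ → TwoNFA F.alph, PolySize2 M ∧ (∀ n, (M n).Deterministic) ∧ Solves2 M F.prob}

def twoU : Set Family :=
  {F | ∃ M : ℕ → TwoNFA F.alph, PolySize2 M ∧ Unambiguous2 M F.prob ∧ Solves2 M F.prob}

def twoFew : Set Family :=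
  {F | ∃ M : ℕ → TwoNFA F.alph, PolySize2 M ∧ AcceptFew2 M F.prob ∧ Solves2 M F.prob}

def twoFewU : Set Family :=
  {F | ∃ M : ℕ → TwoNFA F.alph, PolySize2 M ∧ AcceptFew2 M F.prob ∧
        WeaklyUnambiguous2 M F.prob ∧ Solves2 M F.prob}

def twoReachU : Set Family :=
  {F | ∃ M : ℕ → TwoNFA F.alph, PolySize2 M ∧ AcceptFew2 M F.prob ∧
        ReachUnambiguous2 M F.prob ∧ Solves2 M F.prob}

def twoReachFew : Set Family :=
  {F | ∃ M : ℕ → TwoNFA F.alph, PolySize2 M ∧ AcceptFew2 M F.prob ∧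
        ReachFew2 M F.prob ∧ Solves2 M F.prob}

def twoReachFewU : Set Family :=
  {F | ∃ M : ℕ → TwoNFA F.alph, PolySize2 M ∧ AcceptFew2 M F.prob ∧
        ReachFew2 M F.prob ∧ WeaklyUnambiguous2 M F.prob ∧ Solves2 M F.prob}

/-! ## Ceilings -/

/-- The family `F` has an `f(n)`-ceiling. -/
def HasCeiling (F : Family) (f : ℕ → ℕ) : Prop :=
  ∀ n, ∀ x ∈ F.prob.valid n, x.length ≤ f n

/-- The restriction `C/F` of a class `C` to families having an `f`-ceiling for some `f ∈ S`. -/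
def ceil (C : Set Family) (S : Set (ℕ → ℕ)) : Set Family :=
  {F | F ∈ C ∧ ∃ f ∈ S, HasCeiling F f}

def polyFuns : Set (ℕ → ℕ) := {f | ∃ p : Polynomial ℕ, ∀ n, f n = p.eval n}

/-- Super-exponential functions: `f(n) > 2^{p(n)}` for all but finitely many `n`,
for every polynomial `p`. -/
def supexpFuns : Set (ℕ → ℕ) :=
  {f | ∀ p : Polynomial ℕ, ∃ N, ∀ n ≥ N, 2 ^ p.eval n < f n}

/-- `F` has a logarithmic ceiling `ℓ(n) = a·log₂ n + b` with constants `a, b ≥ 0`. -/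
def HasLogCeiling (F : Family) : Prop :=
  ∃ a b : ℝ, 0 ≤ a ∧ 0 ≤ b ∧
    ∀ n, ∀ x ∈ F.prob.valid n, (x.length : ℝ) ≤ a * Real.logb 2 n + b

/-- The restriction `C/log` of a class `C` to families having logarithmic ceilings. -/
def ceilLog (C : Set Family) : Set Family := {F | F ∈ C ∧ HasLogCeiling F}
/-! ## The alphabet `{0, 1, #}` and encodings -/

inductive Sym3 : Type
  | zero | one | hash
deriving DecidableEq

instance : Fintype Sym3 :=
  ⟨{Sym3.zero, Sym3.one, Sym3.hash}, by intro x; cases x <;> simp⟩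

/-- The block `1^i 0^{m-i}`. -/
def block (m i : ℕ) : List Sym3 :=
  List.replicate i Sym3.one ++ List.replicate (m - i) Sym3.zero

lemma block_length {m i : ℕ} (h : i ≤ m) : (block m i).length = m := by
  simp [block]; omega

lemma block_count {m : ℕ} (i : ℕ) : (block m i).count Sym3.one = i := by
  simp [block, List.count_append, List.count_replicate]

lemma block_inj {m i j : ℕ} (h : block m i = block m j) : i = j := by
  have := block_count (m := m) i
  rw [h, block_count] at this
  omega

/-- The encoding `[[i₁,…,i_k]]_m` of a list of numbers. -/
def enc (m : ℕ) : List ℕ → List Sym3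
  | [] => []
  | [i] => block m i
  | i :: j :: rest => block m i ++ Sym3.zero :: enc m (j :: rest)

/-- Lists of length `k` with entries in `[n]`. -/
def ValidList (n k : ℕ) (l : List ℕ) : Prop :=
  l.length = k ∧ ∀ i ∈ l, 1 ≤ i ∧ i ≤ n

lemma enc_length {m : ℕ} :
    ∀ l : List ℕ, (∀ i ∈ l, i ≤ m) → (enc m l).length = l.length * (m + 1) - 1
  | [] => by simp [enc]
  | [i] => by
      intro h
      simp [enc, block_length (h i (by simp))]
  | i :: j :: rest => by
      intro h
      have ih := enc_length (j :: rest) (fun a ha => h a (List.mem_cons_of_mem _ ha))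
      have hb : (block m i).length = m := block_length (h i (List.mem_cons_self))
      show (block m i ++ Sym3.zero :: enc m (j :: rest)).length = _
      rw [List.length_append, hb, List.length_cons, ih]
      have hc : (i :: j :: rest).length = (j :: rest).length + 1 := by simp
      rw [hc]
      set L := (j :: rest).length with hLdef
      have hL : 1 ≤ L := by simp [hLdef]
      have h1 : (L + 1) * (m + 1) = L * (m + 1) + (m + 1) := by ring
      rw [h1]
      set P := L * (m + 1) with hPdef
      have hP : 1 ≤ P := by
        have := Nat.mul_le_mul hL (Nat.le_add_left 1 m)
        simpa [hPdef] using this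
      omega

lemma enc_ne_nil {m : ℕ} (i : ℕ) (rest : List ℕ) (hi : 1 ≤ i) :
    enc m (i :: rest) ≠ [] := by
  cases rest with
  | nil =>
      simp only [enc, block]
      intro h
      have := congrArg List.length h
      simp at this
      omega
  | cons j rest' =>
      simp only [enc]
      intro h
      have := congrArg List.length h
      simp at this

lemma enc_inj {m : ℕ} :
    ∀ u w : List ℕ, (∀ i ∈ u, 1 ≤ i ∧ i ≤ m) → (∀ i ∈ w, 1 ≤ i ∧ i ≤ m) →
      enc m u = enc m w → u = w
  | [], [], _, _, _ => rfl
  | [], j :: w', _, hw, h => by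
      exact absurd h.symm (enc_ne_nil j w' (hw j (by simp)).1)
  | i :: u', [], hu, _, h => by
      exact absurd h (enc_ne_nil i u' (hu i (by simp)).1)
  | [i], [j], hu, hw, h => by
      simp only [enc] at h
      rw [block_inj h]
  | [i], j :: b :: w', hu, hw, h => by
      exfalso
      have hl := congrArg List.length h
      rw [show enc m [i] = block m i from rfl,
        show enc m (j :: b :: w') = block m j ++ Sym3.zero :: enc m (b :: w') from rfl] at hl
      rw [List.length_append, List.length_cons,
        block_length (hu i (by simp)).2, block_length (hw j (by simp)).2] at hl
      omega
  | i :: a :: u', [j], hu, hw, h => by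
      exfalso
      have hl := congrArg List.length h
      rw [show enc m [j] = block m j from rfl,
        show enc m (i :: a :: u') = block m i ++ Sym3.zero :: enc m (a :: u') from rfl] at hl
      rw [List.length_append, List.length_cons,
        block_length (hu i (by simp)).2, block_length (hw j (by simp)).2] at hl
      omega
  | i :: a :: u', j :: b :: w', hu, hw, h => by
      rw [show enc m (i :: a :: u') = block m i ++ Sym3.zero :: enc m (a :: u') from rfl,
        show enc m (j :: b :: w') = block m j ++ Sym3.zero :: enc m (b :: w') from rfl] at h
      have hlen : (block m i).length = (block m j).length := by
        rw [block_length (hu i (by simp)).2, block_length (hw j (by simp)).2]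
      obtain ⟨h1, h2⟩ := List.append_inj h hlen
      have h3 : enc m (a :: u') = enc m (b :: w') := by
        simpa using h2
      have ih := enc_inj (a :: u') (b :: w')
        (fun x hx => hu x (List.mem_cons_of_mem _ hx))
        (fun x hx => hw x (List.mem_cons_of_mem _ hx)) h3
      rw [block_inj h1, ih]
/-! ## The promise problem family `L₁` -/

def L1pos (n : ℕ) : Set (List Sym3) :=
  {x | ∃ u v : List ℕ, ValidList n n u ∧ ValidList n n v ∧ u ≠ v ∧
        x = enc n u ++ Sym3.hash :: enc n v}

def L1neg (n : ℕ) : Set (List Sym3) :=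
  {x | ∃ u v : List ℕ, ValidList n n u ∧ ValidList n n v ∧ u = v ∧
        x = enc n u ++ Sym3.hash :: enc n v}

lemma L1_disj (n : ℕ) : Disjoint (L1pos n) (L1neg n) := by
  rw [Set.disjoint_left]
  rintro x ⟨u, v, hu, hv, huv, rfl⟩ ⟨u', v', hu', hv', huv', heq⟩
  have hlen : (enc n u).length = (enc n u').length := by
    rw [enc_length u (fun i hi => (hu.2 i hi).2),
      enc_length u' (fun i hi => (hu'.2 i hi).2), hu.1, hu'.1]
  obtain ⟨h1, h2⟩ := List.append_inj heq hlen
  have h2' : enc n v = enc n v' := by simpa using h2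
  have e1 : u = u' := enc_inj u u' hu.2 hu'.2 h1
  have e2 : v = v' := enc_inj v v' hv.2 hv'.2 h2'
  exact huv (by rw [e1, e2, huv'])

def L1prob : PromiseFamily Sym3 := ⟨L1pos, L1neg, L1_disj⟩

def L1fam : Family := { alph := Sym3, prob := L1prob }

/-! ## Matrices, their encodings, and the promise problem family `L₂` -/

/-- `R` represents an `n × n` matrix with entries in `[n]`, given as its list of rows. -/
def ValidMat (n : ℕ) (R : List (List ℕ)) : Prop :=
  R.length = n ∧ ∀ r ∈ R, ValidList n n r

/-- The encoding `[[D]]_n` of a matrix: its encoded rows joined by `#`. -/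
def encMat (n : ℕ) : List (List ℕ) → List Sym3
  | [] => []
  | [r] => enc n r
  | r :: s :: rest => enc n r ++ Sym3.hash :: encMat n (s :: rest)

lemma encMat_len {n : ℕ} :
    ∀ R : List (List ℕ), (∀ r ∈ R, ValidList n n r) →
      (encMat n R).length = R.length * (n * (n + 1) - 1 + 1) - 1
  | [] => by simp [encMat]
  | [r] => by
      intro h
      have hr := h r (by simp)
      have he : (enc n r).length = n * (n + 1) - 1 := by
        rw [enc_length r (fun i hi => (hr.2 i hi).2), hr.1]
      show (enc n r).length = ([r] : List (List ℕ)).length * (n * (n + 1) - 1 + 1) - 1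
      rw [he, show ([r] : List (List ℕ)).length = 1 from rfl]
      omega
  | r :: s :: rest => by
      intro h
      have ih := encMat_len (s :: rest) (fun a ha => h a (List.mem_cons_of_mem _ ha))
      have hr := h r (by simp)
      have he : (enc n r).length = n * (n + 1) - 1 := by
        rw [enc_length r (fun i hi => (hr.2 i hi).2), hr.1]
      show (enc n r ++ Sym3.hash :: encMat n (s :: rest)).length = _
      rw [List.length_append, he, List.length_cons, ih]
      have hc : (r :: s :: rest).length = (s :: rest).length + 1 := by simp
      rw [hc]
      set e := n * (n + 1) - 1 with hedef
      set L := (s :: rest).length with hLdef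
      have hL : 1 ≤ L := by simp [hLdef]
      have h1 : (L + 1) * (e + 1) = L * (e + 1) + (e + 1) := by ring
      rw [h1]
      set P := L * (e + 1) with hPdef
      have hP : 1 ≤ P := by
        calc 1 = 1 * 1 := by ring
        _ ≤ L * (e + 1) := Nat.mul_le_mul hL (by omega)
      omega

lemma encMat_inj {n : ℕ} :
    ∀ R W : List (List ℕ), (∀ r ∈ R, ValidList n n r) → (∀ r ∈ W, ValidList n n r) →
      R.length = W.length → encMat n R = encMat n W → R = W
  | [], [], _, _, _, _ => rfl
  | [], _ :: _, _, _, hl, _ => by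
      simp only [List.length_cons, List.length_nil] at hl
      omega
  | _ :: _, [], _, _, hl, _ => by
      simp only [List.length_cons, List.length_nil] at hl
      omega
  | [r], [w], hR, hW, _, h => by
      have := enc_inj r w (hR r (by simp)).2 (hW w (by simp)).2 h
      rw [this]
  | [r], w :: w' :: W', _, _, hl, _ => by
      simp only [List.length_cons, List.length_nil] at hl
      omega
  | r :: r' :: R', [w], _, _, hl, _ => by
      simp only [List.length_cons, List.length_nil] at hl
      omega
  | r :: r' :: R', w :: w' :: W', hR, hW, hl, h => by
      rw [show encMat n (r :: r' :: R') = enc n r ++ Sym3.hash :: encMat n (r' :: R') from rfl,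
        show encMat n (w :: w' :: W') = enc n w ++ Sym3.hash :: encMat n (w' :: W') from rfl] at h
      have hrlen : (enc n r).length = (enc n w).length := by
        have h1 := hR r (by simp); have h2 := hW w (by simp)
        rw [enc_length r (fun i hi => (h1.2 i hi).2),
          enc_length w (fun i hi => (h2.2 i hi).2), h1.1, h2.1]
      obtain ⟨h1, h2⟩ := List.append_inj h hrlen
      have h3 : encMat n (r' :: R') = encMat n (w' :: W') := by simpa using h2
      have ihr := enc_inj r w (hR r (by simp)).2 (hW w (by simp)).2 h1
      have ih := encMat_inj (r' :: R') (w' :: W')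
        (fun a ha => hR a (List.mem_cons_of_mem _ ha))
        (fun a ha => hW a (List.mem_cons_of_mem _ ha))
        (by simpa using hl) h3
      rw [ihr, ih]

/-- `SelSum R s` holds iff `s` is obtained by choosing one entry from each row of `R`
(the value `sum_D(σ)` for some choice function `σ`). -/
inductive SelSum : List (List ℕ) → ℕ → Prop
  | nil : SelSum [] 0
  | cons {a : ℕ} {r : List ℕ} {rest : List (List ℕ)} {s : ℕ} :
      a ∈ r → SelSum rest s → SelSum (r :: rest) (a + s)

def L2pos (n : ℕ) : Set (List Sym3) :=
  {x | ∃ R R' : List (List ℕ), ValidMat n R ∧ ValidMat n R' ∧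
        (∃ s : ℕ, SelSum R s ∧ SelSum R' s) ∧
        x = encMat n R ++ Sym3.hash :: Sym3.hash :: encMat n R'}

def L2neg (n : ℕ) : Set (List Sym3) :=
  {x | ∃ R R' : List (List ℕ), ValidMat n R ∧ ValidMat n R' ∧
        (∀ s s' : ℕ, SelSum R s → SelSum R' s' → s ≠ s') ∧
        x = encMat n R ++ Sym3.hash :: Sym3.hash :: encMat n R'}

lemma L2_disj (n : ℕ) : Disjoint (L2pos n) (L2neg n) := by
  rw [Set.disjoint_left]
  rintro x ⟨R, R', hR, hR', ⟨s, hs, hs'⟩, rfl⟩ ⟨W, W', hW, hW', hne, heq⟩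
  have hlen : (encMat n R).length = (encMat n W).length := by
    rw [encMat_len R hR.2, encMat_len W hW.2, hR.1, hW.1]
  obtain ⟨h1, h2⟩ := List.append_inj heq hlen
  have h2' : encMat n R' = encMat n W' := by simpa using h2
  have e1 : R = W := encMat_inj R W hR.2 hW.2 (by rw [hR.1, hW.1]) h1
  have e2 : R' = W' := encMat_inj R' W' hR'.2 hW'.2 (by rw [hR'.1, hW'.1]) h2'
  exact hne s s (e1 ▸ hs) (e2 ▸ hs') rfl

def L2prob : PromiseFamily Sym3 := ⟨L2pos, L2neg, L2_disj⟩

def L2fam : Family := { alph := Sym3, prob := L2prob }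
/-! ## One-way probabilistic finite automata data -/

/-- Product of the matrices of the symbols of a word. -/
noncomputable def wordMatrix {α Q : Type} [Fintype Q] [DecidableEq Q]
    (Mσ : TapeSym α → Matrix Q Q ℝ) (w : List (TapeSym α)) : Matrix Q Q ℝ :=
  (w.map Mσ).prod

/-- The tape word `▷ x ◁`. -/
def tapeWord {α : Type} (x : List α) : List (TapeSym α) :=
  Sum.inr false :: (x.map Sum.inl ++ [Sum.inr true])

/-- `p_{acc}(x : q)`: the `q`-entry of the row vector `ν · M_{▷x◁}`. -/
noncomputable def pacc {α Q : Type} [Fintype Q] [DecidableEq Q]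
    (ν : Q → ℝ) (Mσ : TapeSym α → Matrix Q Q ℝ) (x : List α) (q : Q) : ℝ :=
  Matrix.vecMul ν (wordMatrix Mσ (tapeWord x)) q

/-! The complement of "`|x| = lcm(1, …, n + 1)` versus `0 < |x| < lcm(1, …, n + 1)`" over a
unary alphabet is solved by guessing some `i ≤ n + 1` on the first letter and checking `i ∤ |x|`
with a counter modulo `i`. This takes `O(n²)` states, the state reached at any time determines the
guess, and there are at most `n + 1` accepting paths. Conversely, a 1nfa accepting the word of
length `lcm(1, …, n + 1)` with fewer states repeats a state, so it also accepts a shorter nonempty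
word; as `lcm(1, …, n + 1) ≥ 2 ^ (n + 1) / (n + 2)` outgrows every polynomial, no family of
polynomial size separates the two. -/

open Filter Polynomial

theorem Polynomial.eval_le_eval_one_mul_pow (P : ℕ[X]) {n : ℕ} (hn : 1 ≤ n) :
    P.eval n ≤ P.eval 1 * n ^ P.natDegree := by
  rw [eval_eq_sum_range, eval_eq_sum_range, Finset.sum_mul]
  refine Finset.sum_le_sum fun i hi => ?_
  rw [one_pow, mul_one]
  exact Nat.mul_le_mul_left _ (Nat.pow_le_pow_right hn (Finset.mem_range_succ_iff.mp hi))

theorem Nat.exists_mul_pow_lt_two_pow (c d : ℕ) : ∃ n, 1 ≤ n ∧ c * n ^ d < 2 ^ n := by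
  have hlim := (tendsto_pow_const_div_const_pow_of_one_lt d one_lt_two).eventually
    (gt_mem_nhds (show (0 : ℝ) < 1 / (c + 1) by positivity))
  obtain ⟨n, hlt, hn⟩ := (hlim.and (eventually_ge_atTop 1)).exists
  refine ⟨n, hn, ?_⟩
  rw [div_lt_div_iff₀ (by positivity) (by positivity), one_mul] at hlt
  have : (c : ℝ) * n ^ d < 2 ^ n := by nlinarith [pow_nonneg (n.cast_nonneg : (0 : ℝ) ≤ n) d]
  exact_mod_cast this

theorem Polynomial.exists_eval_lt_lcmUpto_succ (P : ℕ[X]) :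
    ∃ n, P.eval n < Nat.lcmUpto (n + 1) := by
  set Q : ℕ[X] := (X + 2) * P
  obtain ⟨n, hn, hlt⟩ := Nat.exists_mul_pow_lt_two_pow (Q.eval 1) Q.natDegree
  refine ⟨n, Nat.lt_of_mul_lt_mul_left (a := n + 2) ?_⟩
  calc (n + 2) * P.eval n = Q.eval n := by simp [Q]
    _ ≤ Q.eval 1 * n ^ Q.natDegree := Q.eval_le_eval_one_mul_pow hn
    _ < 2 ^ n := hlt
    _ < 2 ^ (n + 1) := Nat.pow_lt_pow_succ one_lt_two
    _ ≤ (n + 2) * Nat.lcmUpto (n + 1) := Chebyshev.two_pow_le_mul_lcmUpto (n + 1)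

namespace OneNFA

variable {α : Type} (M : OneNFA α)

theorem accepts_iff_exists_run (x : List α) :
    M.Accepts x ↔ ∃ f : ℕ → M.Q, f 0 = M.start ∧
      (∀ i (hi : i < x.length), f (i + 1) ∈ M.next (f i) x[i]) ∧ f x.length ∈ M.acc := by
  constructor
  · rintro ⟨p, ⟨hstart, hstep⟩, hacc⟩
    refine ⟨fun i => if hi : i < x.length + 1 then p ⟨i, hi⟩ else M.start, by simpa using hstart,
      fun i hi => ?_, by simpa [Fin.last] using hacc⟩
    simpa [hi, Nat.lt_succ_of_lt hi] using hstep ⟨i, hi⟩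
  · rintro ⟨f, hstart, hstep, hacc⟩
    exact ⟨fun i => f i, ⟨hstart, fun i => hstep i i.isLt⟩, hacc⟩

theorem exists_accepts_replicate_of_sc_lt {m : ℕ} {a : α}
    (hacc : M.Accepts (List.replicate m a)) (hsc : M.sc < m) :
    ∃ m', 0 < m' ∧ m' < m ∧ M.Accepts (List.replicate m' a) := by
  obtain ⟨f, hstart, hstep, hfin⟩ := (M.accepts_iff_exists_run _).mp hacc
  simp only [List.length_replicate, List.getElem_replicate] at hstep hfin
  obtain ⟨j₁, j₂, hj, hf⟩ : ∃ j₁ j₂ : ℕ, j₁ < j₂ ∧ j₂ ≤ M.sc ∧ f j₁ = f j₂ := by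
    obtain ⟨a, b, hab, hf⟩ := Fintype.exists_ne_map_eq_of_card_lt (fun j : Fin (M.sc + 1) => f j)
      (by rw [Fintype.card_fin]; exact Nat.lt_succ_self _)
    rcases Fin.lt_or_lt_of_ne hab with h | h
    · exact ⟨a, b, h, Nat.lt_succ_iff.mp b.isLt, hf⟩
    · exact ⟨b, a, h, Nat.lt_succ_iff.mp a.isLt, hf.symm⟩
  -- cut out the loop between positions `j₁` and `j₂`
  refine ⟨m - (j₂ - j₁), by omega, by omega, (M.accepts_iff_exists_run _).mpr
    ⟨fun i => if i ≤ j₁ then f i else f (i + (j₂ - j₁)), by simpa using hstart, ?_, ?_⟩⟩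
  · simp only [List.length_replicate, List.getElem_replicate]
    intro i hi
    rcases lt_trichotomy (i + 1) (j₁ + 1) with h | h | h
    · simpa [show i + 1 ≤ j₁ by omega, show i ≤ j₁ by omega] using hstep i (by omega)
    · simpa [show i = j₁ by omega, show j₁ + 1 + (j₂ - j₁) = j₂ + 1 by omega, hf.2]
        using hstep j₂ (by omega)
    · simpa [show ¬ i + 1 ≤ j₁ by omega, show ¬ i ≤ j₁ by omega,
        show i + 1 + (j₂ - j₁) = i + (j₂ - j₁) + 1 by omega] using hstep _ (by omega)
  · simpa [show ¬ m - (j₂ - j₁) ≤ j₁ by omega, show m - (j₂ - j₁) + (j₂ - j₁) = m by omega]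
      using hfin

end OneNFA

section Counting

variable (α : Type) {K : ℕ} [NeZero K] (q : Fin K → ℕ) [∀ j, NeZero (q j)]

def countingNFA : OneNFA α where
  Q := Option (Σ j, ZMod (q j))
  start := none
  next s _ := match s with
    | none => Set.range fun j => some ⟨j, 1⟩
    | some ⟨j, r⟩ => {some ⟨j, r + 1⟩}
  next_nonempty s _ := match s with
    | none => Set.range_nonempty _
    | some _ => Set.singleton_nonempty _
  acc := {s | ∃ j, ∃ r ≠ 0, s = some ⟨j, r⟩}

variable {α q}

def countingNFA.branch (j : Fin K) (i : ℕ) : (countingNFA α q).Q :=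
  if i = 0 then none else some ⟨j, i⟩

namespace countingNFA

@[simp] theorem branch_zero (j : Fin K) : branch (α := α) (q := q) j 0 = none := rfl

theorem branch_of_ne_zero (j : Fin K) {i : ℕ} (hi : i ≠ 0) :
    branch (α := α) (q := q) j i = some ⟨j, i⟩ := if_neg hi

theorem branch_succ_mem_next (j : Fin K) (i : ℕ) (a : α) :
    branch j (i + 1) ∈ (countingNFA α q).next (branch j i) a := by
  rcases eq_or_ne i 0 with rfl | hi
  · exact ⟨j, by simp [branch]⟩
  · rw [branch_of_ne_zero j hi, branch_of_ne_zero j (Nat.succ_ne_zero i), Nat.cast_succ]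
    rfl

theorem isPath_iff {x : List α} {p : Fin (x.length + 1) → (countingNFA α q).Q} :
    (countingNFA α q).IsPath x p ↔ ∃ j, p = fun i : Fin (x.length + 1) => branch j i := by
  constructor
  · rintro ⟨hstart, hstep⟩
    obtain ⟨j, hj⟩ : ∃ j, ∀ (i : ℕ) (hi : 0 < i) (hx : i < x.length + 1),
        p ⟨i, hx⟩ = branch j i := by
      rcases Nat.eq_zero_or_pos x.length with h | h
      · exact ⟨0, fun i hi hx => by omega⟩
      have h₀ := hstep ⟨0, h⟩
      rw [show (⟨0, h⟩ : Fin x.length).castSucc = 0 from rfl, hstart] at h₀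
      obtain ⟨j, hj⟩ := h₀
      refine ⟨j, fun i hi hx => ?_⟩
      induction i with
      | zero => omega
      | succ i ih =>
        rw [branch_of_ne_zero j (Nat.succ_ne_zero i), Nat.cast_succ]
        rcases Nat.eq_zero_or_pos i with rfl | hi'
        · exact hj.symm.trans (by rw [Nat.cast_zero, zero_add])
        have hnext := hstep ⟨i, by omega⟩
        rw [Fin.castSucc_mk, Fin.succ_mk, ih hi' (by omega), branch_of_ne_zero j hi'.ne']
          at hnext
        exact hnext
    refine ⟨j, funext fun i => ?_⟩
    rcases Nat.eq_zero_or_pos i with h | h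
    · rw [show i = 0 from Fin.ext h, hstart]
      rfl
    · exact hj i h i.isLt
  · rintro ⟨j, rfl⟩
    exact ⟨rfl, fun i => branch_succ_mem_next j i _⟩

theorem branch_mem_acc_iff (j : Fin K) (i : ℕ) :
    branch (α := α) (q := q) j i ∈ (countingNFA α q).acc ↔ ¬ q j ∣ i := by
  rcases eq_or_ne i 0 with rfl | hi
  · simp only [branch_zero, dvd_zero, not_true_eq_false, iff_false]
    rintro ⟨_, _, _, ⟨⟩⟩
  · rw [branch_of_ne_zero j hi, ← ZMod.natCast_eq_zero_iff]
    constructor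
    · rintro ⟨j', r, hr, h⟩
      cases h
      exact hr
    · exact fun h => ⟨j, _, h, rfl⟩

theorem eq_of_branch_eq {j j' : Fin K} {i : ℕ} (hi : i ≠ 0)
    (h : branch (α := α) (q := q) j i = branch j' i) : j = j' := by
  rw [branch_of_ne_zero j hi, branch_of_ne_zero j' hi] at h
  exact congrArg Sigma.fst (Option.some.inj h)

theorem accepts_iff (x : List α) :
    (countingNFA α q).Accepts x ↔ ∃ j, ¬ q j ∣ x.length := by
  simp only [OneNFA.Accepts, OneNFA.IsAccPath, isPath_iff]
  constructor
  · rintro ⟨_, ⟨j, rfl⟩, hacc⟩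
    exact ⟨j, (branch_mem_acc_iff j _).mp hacc⟩
  · rintro ⟨j, hj⟩
    exact ⟨_, ⟨j, rfl⟩, (branch_mem_acc_iff j _).mpr hj⟩

theorem subsingleton_paths_to (x : List α) (s : (countingNFA α q).Q) :
    {p | (countingNFA α q).IsPath x p ∧ p (Fin.last x.length) = s}.Subsingleton := by
  rintro _ ⟨hp, hps⟩ _ ⟨hp', hps'⟩
  obtain ⟨j, rfl⟩ := isPath_iff.mp hp
  obtain ⟨j', rfl⟩ := isPath_iff.mp hp'
  rcases eq_or_ne x.length 0 with h | h
  · funext i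
    rw [show (i : ℕ) = 0 by omega, branch_zero, branch_zero]
  · rw [eq_of_branch_eq h (hps.trans hps'.symm)]

theorem ncard_accPaths_le (x : List α) :
    {p | (countingNFA α q).IsAccPath x p}.ncard ≤ K := by
  calc {p | (countingNFA α q).IsAccPath x p}.ncard
      ≤ (Set.range fun j (i : Fin (x.length + 1)) => branch (α := α) (q := q) j i).ncard :=
        Set.ncard_le_ncard (fun p hp => (isPath_iff.mp hp.1).imp fun _ h => h.symm)
          (Set.finite_range _)
    _ ≤ K := by
        rw [← Set.image_univ]
        exact (Set.ncard_image_le Set.finite_univ).trans (by simp)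

theorem sc_eq : (countingNFA α q).sc = ∑ j, q j + 1 := by
  show Fintype.card (Option (Σ j, ZMod (q j))) = _
  simp [Fintype.card_sigma, ZMod.card]

end countingNFA

end Counting

theorem Nat.exists_not_succ_dvd_iff (n m : ℕ) :
    (∃ j : Fin (n + 1), ¬ (j + 1 : ℕ) ∣ m) ↔ ¬ Nat.lcmUpto (n + 1) ∣ m := by
  rw [Nat.lcmUpto, Finset.lcm_dvd_iff]
  push Not
  constructor
  · rintro ⟨j, hj⟩
    exact ⟨j + 1, Finset.mem_Icc.mpr ⟨by omega, by omega⟩, hj⟩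
  · rintro ⟨i, hi, hdvd⟩
    obtain ⟨hi₁, hi₂⟩ := Finset.mem_Icc.mp hi
    exact ⟨⟨i - 1, by omega⟩, by rwa [Nat.sub_add_cancel hi₁]⟩

def lcmLengthFamily : Family where
  alph := Unit
  prob :=
    { pos := fun n => {x | x.length = Nat.lcmUpto (n + 1)}
      neg := fun n => {x | 0 < x.length ∧ x.length < Nat.lcmUpto (n + 1)}
      disj := fun _ => Set.disjoint_left.mpr fun _ h₁ h₂ => h₂.2.ne h₁ }

theorem co_lcmLengthFamily_mem_oneReachU : lcmLengthFamily.co ∈ oneReachU := by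
  refine ⟨fun n => countingNFA Unit (fun j : Fin (n + 1) => (j : ℕ) + 1),
    ⟨(X + 1) ^ 2 + 1, fun n => ?_⟩, ⟨MvPolynomial.X 0 + 1, fun n x _ => ?_⟩,
    fun n x _ i _ s => countingNFA.subsingleton_paths_to _ s, fun n => ⟨?_, ?_⟩⟩
  · have hsum : ∑ j : Fin (n + 1), ((j : ℕ) + 1) ≤ (n + 1) * (n + 1) := by
      simpa using Finset.sum_le_card_nsmul Finset.univ (fun j : Fin (n + 1) => (j : ℕ) + 1)
        (n + 1) fun j _ => by omega
    refine countingNFA.sc_eq.trans_le ?_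
    simpa [sq] using hsum
  · exact (countingNFA.ncard_accPaths_le (α := Unit) x).trans (by simp)
  · rintro x ⟨hpos, hlt⟩
    exact (countingNFA.accepts_iff x).mpr
      ((Nat.exists_not_succ_dvd_iff n _).mpr (Nat.not_dvd_of_pos_of_lt hpos hlt))
  · intro x hx hacc
    exact (Nat.exists_not_succ_dvd_iff n _).mp ((countingNFA.accepts_iff (α := Unit) x).mp hacc)
      (hx ▸ dvd_rfl)

theorem lcmLengthFamily_not_mem_oneN : lcmLengthFamily ∉ oneN := by
  rintro ⟨M, ⟨P, hP⟩, hsolve⟩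
  obtain ⟨n, hn⟩ := P.exists_eval_lt_lcmUpto_succ
  obtain ⟨m, hm₀, hmN, hacc⟩ := (M n).exists_accepts_replicate_of_sc_lt
    ((hsolve n).1 (List.replicate _ ()) (List.length_replicate ..)) ((hP n).trans_lt hn)
  exact (hsolve n).2 (List.replicate m ())
    ⟨hm₀.trans_eq (List.length_replicate ..).symm, (List.length_replicate ..).trans_lt hmN⟩ hacc

/-- `co-1ReachU ⊄ 1N`: some family has complement in `1ReachU`
but itself lies outside `1N`. -/
theorem co_oneReachU_not_subset_oneN :
    ∃ F : Family, F.co ∈ oneReachU ∧ F ∉ oneN :=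
  ⟨lcmLengthFamily, co_lcmLengthFamily_mem_oneReachU, lcmLengthFamily_not_mem_oneN⟩
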